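/- arXiv:1607.07831 — 4 statements merged into one kernel-verified Lean document; each statement's English description precedes it below -/
import Mathlib

section
/- (Jacobi triple product) For |q|<1 and z ≠ 0, θ_q(z) = (1/(q;q)_∞) · Σ_{n=−∞}^{∞} (−1)^n q^{n(n−1)/2} z^n, i.e. (z;q)_∞ (q/z;q)_∞ (q;q)_∞ = Σ_{n∈ℤ} (−1)^n q^{n(n−1)/2} z^n. -/
noncomputable def qPochInf (q z : ℂ) : ℂ := ∏' k : ℕ, (1 - q ^ k * z)

noncomputable def qTheta (q z : ℂ) : ℂ := qPochInf q z * qPochInf q (q / z)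

/-!
Cauchy's `q`-binomial theorem `∏_{k<2N} (1 + t q^k) = ∑_j q^(j choose 2) [2N, j]_q t^j`,
evaluated at `t = -z / q^N`, gives the finite identity
`(z;q)_N (q/z;q)_N (q;q)_N = ∑_{|n| ≤ N} (q;q)_N [2N, N+n]_q (-1)^n q^(n(n-1)/2) z^n`.
Since `(q;q)_N [2N, N+n]_q = (q;q)_N (q;q)_{2N} / ((q;q)_{N+n} (q;q)_{N-n})` and `(q;q)_m`
converges to `(q;q)_∞ ≠ 0`, these coefficients tend to `1` and are bounded uniformly in `N` and
`n`, so Tannery's theorem lets `N → ∞`. The substitution needs `q ≠ 0`; the case `q = 0` is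
checked directly.
-/

open Finset Filter Topology

section CommRing

variable {R : Type*} [CommRing R]

def gaussBinom (q : R) : ℕ → ℕ → R
  | _, 0 => 1
  | 0, _ + 1 => 0
  | n + 1, k + 1 => gaussBinom q n k + q ^ (k + 1) * gaussBinom q n (k + 1)

@[simp]
lemma gaussBinom_zero_right (q : R) (n : ℕ) : gaussBinom q n 0 = 1 := by
  cases n <;> rfl

lemma gaussBinom_succ_succ (q : R) (n k : ℕ) :
    gaussBinom q (n + 1) (k + 1) = gaussBinom q n k + q ^ (k + 1) * gaussBinom q n (k + 1) :=
  rfl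

lemma gaussBinom_of_lt (q : R) {n k : ℕ} (h : n < k) : gaussBinom q n k = 0 := by
  induction n generalizing k with
  | zero => obtain ⟨k, rfl⟩ := Nat.exists_eq_succ_of_ne_zero h.ne'; rfl
  | succ n ih =>
    obtain ⟨k, rfl⟩ := Nat.exists_eq_succ_of_ne_zero (Nat.ne_zero_of_lt h)
    rw [gaussBinom_succ_succ, ih (by omega), ih (by omega), mul_zero, add_zero]

@[simp]
lemma gaussBinom_self (q : R) (n : ℕ) : gaussBinom q n n = 1 := by
  induction n with
  | zero => rfl
  | succ n ih =>
    rw [gaussBinom_succ_succ, ih, gaussBinom_of_lt q n.lt_succ_self, mul_zero, add_zero]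

/-- Cauchy's `q`-binomial theorem. -/
theorem prod_one_add_mul_pow (q t : R) (n : ℕ) :
    ∏ k ∈ range n, (1 + t * q ^ k)
      = ∑ j ∈ range (n + 1), gaussBinom q n j * q ^ j.choose 2 * t ^ j := by
  induction n generalizing t with
  | zero => simp
  | succ n ih =>
    have hshift : ∏ k ∈ range n, (1 + t * q ^ (k + 1)) = ∏ k ∈ range n, (1 + t * q * q ^ k) :=
      prod_congr rfl fun k _ => by ring
    have hlow : ∑ j ∈ range (n + 1), gaussBinom q n j * q ^ j.choose 2 * (t * q) ^ j
        = 1 + ∑ j ∈ range (n + 1),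
          q ^ (j + 1) * gaussBinom q n (j + 1) * q ^ (j + 1).choose 2 * t ^ (j + 1) := by
      rw [sum_range_succ (fun j => q ^ (j + 1) * gaussBinom q n (j + 1) * _ * _) n,
        gaussBinom_of_lt q n.lt_succ_self, sum_range_succ', add_comm]
      simp only [Nat.choose_succ_succ', Nat.choose_one_right, mul_zero, zero_mul, add_zero]
      congr 1
      · simp
      · exact sum_congr rfl fun j _ => by ring
    have hhigh : (∑ j ∈ range (n + 1), gaussBinom q n j * q ^ j.choose 2 * (t * q) ^ j) * t
        = ∑ j ∈ range (n + 1), gaussBinom q n j * q ^ (j + 1).choose 2 * t ^ (j + 1) := by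
      rw [sum_mul]
      exact sum_congr rfl fun j _ => by rw [Nat.choose_succ_succ', Nat.choose_one_right]; ring
    rw [prod_range_succ', hshift, ih, pow_zero, mul_one, mul_one_add, hhigh, hlow,
      sum_range_succ' _ (n + 1)]
    simp only [gaussBinom_succ_succ, add_mul, sum_add_distrib, gaussBinom_zero_right,
      Nat.choose_zero_succ, pow_zero, mul_one]
    ring

def qPoch (q z : R) (n : ℕ) : R := ∏ k ∈ range n, (1 - q ^ k * z)

@[simp]
lemma qPoch_zero (q z : R) : qPoch q z 0 = 1 := prod_range_zero _

lemma qPoch_succ (q z : R) (n : ℕ) : qPoch q z (n + 1) = qPoch q z n * (1 - q ^ n * z) :=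
  prod_range_succ _ n

lemma gaussBinom_add_mul_qPoch (q : R) (m n : ℕ) :
    gaussBinom q (m + n) m * qPoch q q m * qPoch q q n = qPoch q q (m + n) := by
  induction m generalizing n with
  | zero => simp
  | succ m ihm =>
    induction n with
    | zero => simp
    | succ n ihn =>
      have hpascal : gaussBinom q (m + 1 + (n + 1)) (m + 1)
          = gaussBinom q (m + (n + 1)) m + q ^ (m + 1) * gaussBinom q (m + (n + 1)) (m + 1) := by
        rw [show m + 1 + (n + 1) = m + (n + 1) + 1 by omega, gaussBinom_succ_succ]
      have ihm' := ihm (n + 1)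
      rw [qPoch_succ q q n] at ihm'
      rw [qPoch_succ q q m, show m + 1 + n = m + (n + 1) by omega] at ihn
      rw [hpascal, qPoch_succ q q m, qPoch_succ q q n,
        show m + 1 + (n + 1) = m + (n + 1) + 1 by omega, qPoch_succ q q (m + (n + 1))]
      linear_combination (1 - q ^ m * q) * ihm' + q ^ (m + 1) * (1 - q ^ n * q) * ihn

end CommRing

lemma Int.mul_add_one_ediv_two (n : ℤ) : n * (n + 1) / 2 = n * (n - 1) / 2 + n := by
  rw [show n * (n + 1) = n * (n - 1) + n * 2 by ring, Int.add_mul_ediv_right _ _ two_ne_zero]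

section Field

variable {K : Type*} [Field K] {q z : K}

def thetaTerm (q z : K) (n : ℤ) : K := (-1) ^ n * q ^ (n * (n - 1) / 2) * z ^ n

lemma thetaTerm_add_one (hq : q ≠ 0) (hz : z ≠ 0) (n : ℤ) :
    thetaTerm q z (n + 1) = -(q ^ n * z) * thetaTerm q z n := by
  have hexp : (n + 1) * (n + 1 - 1) / 2 = n * (n - 1) / 2 + n := by
    rw [add_sub_cancel_right, mul_comm, Int.mul_add_one_ediv_two]
  simp only [thetaTerm, hexp, zpow_add₀ hq, zpow_add₀ hz,
    zpow_add₀ (neg_ne_zero.2 one_ne_zero : (-1 : K) ≠ 0), zpow_one]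
  ring

lemma thetaTerm_neg (hq : q ≠ 0) (n : ℤ) :
    thetaTerm q z (-n) = thetaTerm q (q / z) n := by
  have hexp : -n * (-n - 1) / 2 = n * (n - 1) / 2 + n := by
    rw [show -n * (-n - 1) = n * (n + 1) by ring, Int.mul_add_one_ediv_two]
  simp only [thetaTerm, hexp, zpow_add₀ hq, div_zpow, zpow_neg, ← inv_zpow (-1 : K), inv_neg,
    inv_one]
  ring

lemma thetaTerm_natCast (hq : q ≠ 0) (hz : z ≠ 0) (N : ℕ) :
    thetaTerm q z N = ∏ k ∈ range N, -(q ^ k * z) := by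
  induction N with
  | zero => simp [thetaTerm]
  | succ N ih =>
    rw [Nat.cast_succ, thetaTerm_add_one hq hz, ih, prod_range_succ, zpow_natCast, mul_comm]

lemma thetaTerm_natCast_sub (hq : q ≠ 0) (hz : z ≠ 0) (N j : ℕ) :
    thetaTerm q z (j - N) = thetaTerm q z (-N) * (q ^ j.choose 2 * (-(z / q ^ N)) ^ j) := by
  induction j with
  | zero => simp
  | succ j ih =>
    rw [Nat.cast_succ, show (j : ℤ) + 1 - N = j - N + 1 by ring, thetaTerm_add_one hq hz, ih,
      zpow_sub₀ hq, zpow_natCast, zpow_natCast, Nat.choose_succ_succ', Nat.choose_one_right]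
    ring

lemma qPoch_div_eq (hq : q ≠ 0) (hz : z ≠ 0) (N : ℕ) :
    qPoch q (q / z) N = (∏ k ∈ range N, (1 + -(z / q ^ N) * q ^ k)) * thetaTerm q z (-N) := by
  rw [thetaTerm_neg hq, thetaTerm_natCast hq (div_ne_zero hq hz),
    ← prod_range_reflect (fun k => 1 + -(z / q ^ N) * q ^ k) N, ← prod_mul_distrib, qPoch]
  refine prod_congr rfl fun k hk => ?_
  have hpow : q ^ (N - 1 - k) * q ^ (k + 1) = q ^ N := by
    rw [← pow_add, show N - 1 - k + (k + 1) = N by have := mem_range.1 hk; omega]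
  rw [← hpow]
  field_simp
  ring

/-- The first `N` factors of Cauchy's product at `t = -z / q ^ N` give `(q/z; q)_N` up to the factor
`thetaTerm q z (-N)`, the last `N` give `(z; q)_N`. -/
theorem qPoch_mul_qPoch_div (hq : q ≠ 0) (hz : z ≠ 0) (N : ℕ) :
    qPoch q z N * qPoch q (q / z) N
      = ∑ j ∈ range (2 * N + 1), gaussBinom q (2 * N) j * thetaTerm q z (j - N) := by
  set t := -(z / q ^ N)
  have hupper : ∏ k ∈ range N, (1 + t * q ^ (N + k)) = qPoch q z N :=
    prod_congr rfl fun k _ => by simp only [t, pow_add]; field_simp; ring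
  calc qPoch q z N * qPoch q (q / z) N
      = (∏ k ∈ range (2 * N), (1 + t * q ^ k)) * thetaTerm q z (-N) := by
        rw [two_mul, prod_range_add, hupper, qPoch_div_eq hq hz]
        ring
    _ = _ := by
        rw [prod_one_add_mul_pow, sum_mul]
        exact sum_congr rfl fun j _ => by rw [thetaTerm_natCast_sub hq hz]; ring

noncomputable def thetaCoeff (q : K) (N : ℕ) (n : ℤ) : K :=
  if n ∈ Icc (-N : ℤ) N then qPoch q q N * gaussBinom q (2 * N) (n + N).toNat else 0

theorem qPoch_mul_qPoch_div_mul_qPoch (hq : q ≠ 0) (hz : z ≠ 0) (N : ℕ) :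
    qPoch q z N * qPoch q (q / z) N * qPoch q q N
      = ∑ n ∈ Icc (-N : ℤ) N, thetaCoeff q N n * thetaTerm q z n := by
  rw [qPoch_mul_qPoch_div hq hz, sum_mul]
  refine sum_nbij' (fun j => (j : ℤ) - N) (fun n => (n + N).toNat) ?_ ?_ ?_ ?_ ?_ <;>
    intro j hj <;> simp only [mem_range, mem_Icc] at hj ⊢ <;> try omega
  rw [thetaCoeff, if_pos (mem_Icc.2 (by omega)), show ((j : ℤ) - N + N).toNat = j by omega]
  ring

lemma thetaCoeff_eq (hP : ∀ m, qPoch q q m ≠ 0) {N : ℕ} {n : ℤ} (hn : n ∈ Icc (-N : ℤ) N) :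
    thetaCoeff q N n = qPoch q q N * qPoch q q (2 * N)
      * (qPoch q q (n + N).toNat)⁻¹ * (qPoch q q (N - n).toNat)⁻¹ := by
  have hsplit : 2 * N = (n + N).toNat + (N - n).toNat := by rw [mem_Icc] at hn; omega
  have h := gaussBinom_add_mul_qPoch q (n + N).toNat (N - n).toNat
  rw [← hsplit] at h
  rw [thetaCoeff, if_pos hn, ← h]
  field_simp [hP]

end Field

section Complex

variable {q : ℂ}

lemma multipliable_one_sub_pow_mul (hq : ‖q‖ < 1) (z : ℂ) :
    Multipliable fun k : ℕ => 1 - q ^ k * z := by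
  simp_rw [sub_eq_add_neg]
  apply multipliable_one_add_of_summable
  simpa [norm_mul] using (summable_geometric_of_lt_one (norm_nonneg q) hq).mul_right ‖z‖

lemma tendsto_qPoch (hq : ‖q‖ < 1) (z : ℂ) : Tendsto (qPoch q z) atTop (𝓝 (qPochInf q z)) :=
  (multipliable_one_sub_pow_mul hq z).hasProd.tendsto_prod_nat

lemma one_sub_pow_mul_self_ne_zero (hq : ‖q‖ < 1) (k : ℕ) : 1 - q ^ k * q ≠ 0 := by
  rw [sub_ne_zero, ← pow_succ]
  intro h
  have : ‖q‖ ^ (k + 1) < 1 := pow_lt_one₀ (norm_nonneg q) hq k.succ_ne_zero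
  rw [← norm_pow, ← h, norm_one] at this
  exact this.false

lemma qPoch_self_ne_zero (hq : ‖q‖ < 1) (n : ℕ) : qPoch q q n ≠ 0 :=
  prod_ne_zero_iff.2 fun k _ => one_sub_pow_mul_self_ne_zero hq k

lemma qPochInf_self_ne_zero (hq : ‖q‖ < 1) : qPochInf q q ≠ 0 := by
  simp_rw [qPochInf, sub_eq_add_neg]
  refine tprod_one_add_ne_zero_of_summable (fun k => ?_) ?_
  · rw [← sub_eq_add_neg]; exact one_sub_pow_mul_self_ne_zero hq k
  · simpa [norm_mul] using (summable_geometric_of_lt_one (norm_nonneg q) hq).mul_right ‖q‖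

lemma exists_norm_qPoch_self_le (hq : ‖q‖ < 1) :
    ∃ C, ∀ m, ‖qPoch q q m‖ ≤ C ∧ ‖(qPoch q q m)⁻¹‖ ≤ C := by
  obtain ⟨C₁, h₁⟩ := isBounded_iff_forall_norm_le.1 <|
    Metric.isBounded_range_of_tendsto _ (tendsto_qPoch hq q)
  obtain ⟨C₂, h₂⟩ := isBounded_iff_forall_norm_le.1 <|
    Metric.isBounded_range_of_tendsto _ ((tendsto_qPoch hq q).inv₀ (qPochInf_self_ne_zero hq))
  exact ⟨max C₁ C₂, fun m => ⟨(h₁ _ ⟨m, rfl⟩).trans (le_max_left _ _),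
    (h₂ _ ⟨m, rfl⟩).trans (le_max_right _ _)⟩⟩

lemma exists_norm_thetaCoeff_le (hq : ‖q‖ < 1) : ∃ C, ∀ N n, ‖thetaCoeff q N n‖ ≤ C := by
  obtain ⟨C, hC⟩ := exists_norm_qPoch_self_le hq
  have hC0 : 0 ≤ C := (norm_nonneg _).trans (hC 0).1
  refine ⟨C ^ 4, fun N n => ?_⟩
  by_cases hn : n ∈ Icc (-N : ℤ) N
  · rw [thetaCoeff_eq (qPoch_self_ne_zero hq) hn, norm_mul, norm_mul, norm_mul,
      show C ^ 4 = C * C * C * C by ring]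
    gcongr
    exacts [(hC _).1, (hC _).1, (hC _).2, (hC _).2]
  · rw [thetaCoeff, if_neg hn, norm_zero]
    positivity

lemma tendsto_thetaCoeff (hq : ‖q‖ < 1) (n : ℤ) :
    Tendsto (fun N => thetaCoeff q N n) atTop (𝓝 1) := by
  have hP := tendsto_qPoch hq q
  have hP' := hP.inv₀ (qPochInf_self_ne_zero hq)
  have hdouble : Tendsto (fun N : ℕ => 2 * N) atTop atTop := tendsto_id.const_mul_atTop' two_pos
  have hplus : Tendsto (fun N : ℕ => (n + N).toNat) atTop atTop :=
    tendsto_atTop_atTop.2 fun b => ⟨b + n.natAbs, fun N hN => by omega⟩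
  have hminus : Tendsto (fun N : ℕ => (N - n).toNat) atTop atTop :=
    tendsto_atTop_atTop.2 fun b => ⟨b + n.natAbs, fun N hN => by omega⟩
  have hlim := ((hP.mul (hP.comp hdouble)).mul (hP'.comp hplus)).mul (hP'.comp hminus)
  rw [mul_inv_cancel_right₀ (qPochInf_self_ne_zero hq), mul_inv_cancel₀ (qPochInf_self_ne_zero hq)]
    at hlim
  refine hlim.congr' ?_
  filter_upwards [eventually_ge_atTop n.natAbs] with N hN
  rw [thetaCoeff_eq (qPoch_self_ne_zero hq) (mem_Icc.2 (by omega))]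
  rfl

lemma summable_norm_thetaTerm_natCast (hq : ‖q‖ < 1) (hq0 : q ≠ 0) {z : ℂ} (hz : z ≠ 0) :
    Summable fun k : ℕ => ‖thetaTerm q z k‖ := by
  refine Summable.norm (summable_of_ratio_norm_eventually_le (r := 1 / 2) (by norm_num) ?_)
  have hsmall : Tendsto (fun k : ℕ => ‖q‖ ^ k * ‖z‖) atTop (𝓝 0) := by
    simpa using (tendsto_pow_atTop_nhds_zero_of_lt_one (norm_nonneg q) hq).mul_const ‖z‖
  filter_upwards [hsmall.eventually (eventually_le_nhds (by norm_num : (0 : ℝ) < 1 / 2))]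
    with k hk
  rw [Nat.cast_succ, thetaTerm_add_one hq0 hz, norm_mul, norm_neg, norm_mul, zpow_natCast,
    norm_pow]
  gcongr

lemma summable_norm_thetaTerm (hq : ‖q‖ < 1) (hq0 : q ≠ 0) {z : ℂ} (hz : z ≠ 0) :
    Summable fun n : ℤ => ‖thetaTerm q z n‖ := by
  refine .of_nat_of_neg (summable_norm_thetaTerm_natCast hq hq0 hz) ?_
  simpa only [thetaTerm_neg hq0] using
    summable_norm_thetaTerm_natCast hq hq0 (div_ne_zero hq0 hz)

lemma tendsto_tsum_thetaCoeff_mul (hq : ‖q‖ < 1) (hq0 : q ≠ 0) {z : ℂ} (hz : z ≠ 0) :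
    Tendsto (fun N => ∑' n, thetaCoeff q N n * thetaTerm q z n) atTop
      (𝓝 (∑' n, thetaTerm q z n)) := by
  obtain ⟨C, hC⟩ := exists_norm_thetaCoeff_le hq
  refine tendsto_tsum_of_dominated_convergence ((summable_norm_thetaTerm hq hq0 hz).mul_left C)
    (fun n => by simpa using (tendsto_thetaCoeff hq n).mul_const (thetaTerm q z n))
    (.of_forall fun N n => ?_)
  rw [norm_mul]
  gcongr
  exact hC N n

theorem qPochInf_mul_qPochInf_div_mul_qPochInf (hq : ‖q‖ < 1) (hq0 : q ≠ 0) {z : ℂ}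
    (hz : z ≠ 0) :
    qPochInf q z * qPochInf q (q / z) * qPochInf q q = ∑' n, thetaTerm q z n := by
  refine tendsto_nhds_unique
    (((tendsto_qPoch hq z).mul (tendsto_qPoch hq (q / z))).mul (tendsto_qPoch hq q))
    ((tendsto_tsum_thetaCoeff_mul hq hq0 hz).congr fun N => ?_)
  rw [qPoch_mul_qPoch_div_mul_qPoch hq0 hz,
    tsum_eq_sum fun n hn => by rw [thetaCoeff, if_neg hn, zero_mul]]

lemma qPochInf_zero_left (z : ℂ) : qPochInf 0 z = 1 - z := by
  rw [qPochInf, tprod_eq_mulSingle 0 fun k hk => by rw [zero_pow hk, zero_mul, sub_zero],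
    pow_zero, one_mul]

lemma tsum_thetaTerm_zero_left (z : ℂ) : ∑' n, thetaTerm 0 z n = 1 - z := by
  rw [tsum_eq_sum (s := {0, 1}) fun n hn => ?_]
  · simp [thetaTerm, sub_eq_add_neg]
  · have htri : 2 ≤ n * (n - 1) := by
      simp only [mem_insert, mem_singleton, not_or] at hn
      rcases (by omega : n ≤ -1 ∨ 2 ≤ n) with h | h <;> nlinarith
    rw [thetaTerm, zero_zpow _ (by omega), mul_zero, zero_mul]

end Complex

theorem jacobi_triple_product (q z : ℂ) (hq : ‖q‖ < 1) (hz : z ≠ 0) :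
    qPochInf q z * qPochInf q (q / z) * qPochInf q q
      = ∑' n : ℤ, (-1) ^ n * q ^ (n * (n - 1) / 2) * z ^ n := by
  change _ = ∑' n, thetaTerm q z n
  rcases eq_or_ne q 0 with rfl | hq0
  · rw [zero_div, qPochInf_zero_left, qPochInf_zero_left, tsum_thetaTerm_zero_left]
    ring
  · exact qPochInf_mul_qPochInf_div_mul_qPochInf hq hq0 hz
end

section
/- A nonzero holomorphic function f on ℂ* satisfying f(pz) = C z^{−k} f(z) with 0<|p|<1 has exactly k zeros (counted with multiplicity) in each fundamental annulus {z : r ≤ |z| < r/|p|}; in particular k ≥ 0, and k = 0 forces f to have no zeros. -/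
/-!
Argument principle on an annulus: subtracting from `f'/f` its principal parts
`∑ ord_b f / (z - b)` at the zeros `b` leaves a function analytic on the closed annulus, so by
Cauchy's theorem `∮_{|z|=R} f'/f - ∮_{|z|=r} f'/f` is `2πi` times the number of zeros in between.
For the theta function, differentiating the functional equation gives
`p (f'/f)(p z) = (f'/f)(z) - k / z`, and the substitution `z ↦ p z` turns this into
`∮_{|z|=R} f'/f - ∮_{|z|=|p|R} f'/f = 2πi k`. Since the zero set is invariant under `z ↦ p z`,
the radius `R` can be chosen so that neither circle carries a zero and the closed annulus
`|p| R ≤ |z| ≤ R` contains the same zeros as `r ≤ |z| < r / |p|`; comparing the two integrals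
counts these zeros, and `k ≥ 0` follows.
-/

open Filter Topology Set Metric Complex Real

theorem eventuallyEq_limUnder_nhdsNE {X Y : Type*} [TopologicalSpace X] [T1Space X]
    [∀ x : X, (𝓝[≠] x).NeBot] [TopologicalSpace Y] [T2Space Y] [Nonempty Y] {H G : X → Y} {w : X}
    (hG : ∀ᶠ z in 𝓝 w, ContinuousAt G z) (hHG : H =ᶠ[𝓝[≠] w] G) :
    (fun z => limUnder (𝓝[≠] z) H) =ᶠ[𝓝 w] G := by
  have hHG' : ∀ᶠ z in 𝓝 w, H =ᶠ[𝓝[≠] z] G := by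
    filter_upwards [(eventually_nhdsWithin_iff.1 hHG).eventually_nhds] with z hz
    rcases eq_or_ne z w with rfl | hzw
    · exact eventually_nhdsWithin_iff.2 hz
    · exact eventually_nhdsWithin_of_eventually_nhds <|
        (hz.and (eventually_ne_nhds hzw)).mono fun y hy => hy.1 hy.2
  filter_upwards [hG, hHG'] with z hGz hz
  exact ((hGz.tendsto.mono_left nhdsWithin_le_nhds).congr' hz.symm).limUnder_eq

theorem AnalyticAt.exists_logDeriv_eventuallyEq {𝕜 : Type*} [NontriviallyNormedField 𝕜]
    [CompleteSpace 𝕜] {f : 𝕜 → 𝕜} {w : 𝕜} (hf : AnalyticAt 𝕜 f w)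
    (hfin : analyticOrderAt f w ≠ ⊤) :
    ∃ G : 𝕜 → 𝕜, AnalyticAt 𝕜 G w ∧
      logDeriv f =ᶠ[𝓝[≠] w] fun z => analyticOrderNatAt f w * (z - w)⁻¹ + G z := by
  obtain ⟨g, hg, hgw, hfg⟩ := (hf.analyticOrderNatAt_eq_iff hfin).1 rfl
  refine ⟨logDeriv g, hg.deriv.div hg hgw, ?_⟩
  filter_upwards [eventually_nhdsWithin_of_eventually_nhds hfg.eventually_nhds,
    eventually_nhdsWithin_of_eventually_nhds hg.eventually_analyticAt,
    eventually_nhdsWithin_of_eventually_nhds (hg.continuousAt.eventually_ne hgw),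
    self_mem_nhdsWithin] with z hfz hgz hgz0 hzw
  have hzw' : z - w ≠ 0 := sub_ne_zero.2 hzw
  simp only [smul_eq_mul] at hfz
  rw [(logDeriv_congr_nhds hfz).eq_of_nhds,
    logDeriv_mul (f := fun x => (x - w) ^ analyticOrderNatAt f w) z (pow_ne_zero _ hzw') hgz0
      ((differentiableAt_id.sub_const w).pow _) hgz.differentiableAt,
    logDeriv_fun_pow (f := (· - w)) (differentiableAt_id.sub_const w), logDeriv_apply,
    deriv_sub_const, deriv_id'', one_div]

theorem analyticAt_sum_mul_inv_sub {𝕜 : Type*} [NontriviallyNormedField 𝕜] {s : Finset 𝕜}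
    (n : 𝕜 → 𝕜) {w : 𝕜} (hw : w ∉ s) :
    AnalyticAt 𝕜 (fun z => ∑ b ∈ s, n b * (z - b)⁻¹) w :=
  Finset.analyticAt_fun_sum _ fun _ hb =>
    analyticAt_const.mul <| (analyticAt_id.sub analyticAt_const).inv <|
      sub_ne_zero.2 (ne_of_mem_of_not_mem hb hw).symm

theorem circleIntegral_sub_inv_of_notMem_closedBall {c w : ℂ} {R : ℝ} (hR : 0 ≤ R)
    (hw : w ∉ closedBall c R) : ∮ z in C(c, R), (z - w)⁻¹ = 0 := by
  refine DiffContOnCl.circleIntegral_eq_zero hR ?_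
  refine DifferentiableOn.diffContOnCl_ball (U := closedBall c R) ?_ subset_rfl
  exact fun z hz => ((differentiableAt_id.sub_const w).inv
    (sub_ne_zero.2 fun h => hw (h ▸ hz))).differentiableWithinAt

theorem circleIntegral_sum_mul_inv_sub_sub {c : ℂ} {r R : ℝ} {s : Finset ℂ} (n : ℂ → ℂ)
    (hr : 0 ≤ r) (hs : ∀ b ∈ s, r < dist b c ∧ dist b c < R) :
    (∮ z in C(c, R), ∑ b ∈ s, n b * (z - b)⁻¹) - ∮ z in C(c, r), ∑ b ∈ s, n b * (z - b)⁻¹ =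
      2 * π * I * ∑ b ∈ s, n b := by
  have hsum : ∀ ρ, (∀ b ∈ s, b ∉ sphere c |ρ|) →
      ∮ z in C(c, ρ), ∑ b ∈ s, n b * (z - b)⁻¹ = ∑ b ∈ s, n b * ∮ z in C(c, ρ), (z - b)⁻¹ := by
    intro ρ hsρ
    rw [circleIntegral.integral_fun_sum (f := fun b z => n b * (z - b)⁻¹) fun b hb =>
      (circleIntegrable_sub_inv_iff.2 (.inr (hsρ b hb))).const_smul (a := n b)]
    exact Finset.sum_congr rfl fun b _ => circleIntegral.integral_const_mul _ _ _ _
  rw [hsum R fun b hb h => (hs b hb).2.ne <| by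
      rwa [mem_sphere, abs_of_pos (dist_nonneg.trans_lt (hs b hb).2)] at h,
    hsum r fun b hb h => (hs b hb).1.ne' <| by rwa [mem_sphere, abs_of_nonneg hr] at h,
    Finset.mul_sum, ← Finset.sum_sub_distrib]
  refine Finset.sum_congr rfl fun b hb => ?_
  rw [circleIntegral.integral_sub_inv_of_mem_ball (mem_ball.2 (hs b hb).2),
    circleIntegral_sub_inv_of_notMem_closedBall hr (by simpa using (hs b hb).1)]
  ring

theorem AnalyticOnNhd.exists_logDeriv_eq_add_sum_mul_inv_sub {𝕜 : Type*}
    [NontriviallyNormedField 𝕜] [CompleteSpace 𝕜] {f : 𝕜 → 𝕜} {K : Set 𝕜} {s : Finset 𝕜}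
    (hf : AnalyticOnNhd 𝕜 f K) (hsK : ↑s ⊆ K) (hs : ∀ z ∈ K, f z = 0 → z ∈ s)
    (hord : ∀ z ∈ s, analyticOrderAt f z ≠ ⊤) :
    ∃ F : 𝕜 → 𝕜, AnalyticOnNhd 𝕜 F K ∧ ∀ z ∈ K, z ∉ s →
      logDeriv f z = F z + ∑ b ∈ s, analyticOrderNatAt f b * (z - b)⁻¹ := by
  classical
  set n : 𝕜 → 𝕜 := fun b => analyticOrderNatAt f b
  set H : 𝕜 → 𝕜 := fun z => logDeriv f z - ∑ b ∈ s, n b * (z - b)⁻¹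
  have hH : ∀ w ∈ K, w ∉ s → AnalyticAt 𝕜 H w := fun w hwK hws =>
    ((hf w hwK).deriv.div (hf w hwK) fun h => hws (hs w hwK h)).sub
      (analyticAt_sum_mul_inv_sub n hws)
  -- at a zero `w` the pole of `logDeriv f` is cancelled by the term of the sum at `w`
  have hHs : ∀ w ∈ s, ∃ G : 𝕜 → 𝕜, AnalyticAt 𝕜 G w ∧ H =ᶠ[𝓝[≠] w] G := by
    intro w hws
    obtain ⟨G, hG, hfG⟩ := (hf w (hsK hws)).exists_logDeriv_eventuallyEq (hord w hws)
    refine ⟨fun z => G z - ∑ b ∈ s.erase w, n b * (z - b)⁻¹,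
      hG.sub (analyticAt_sum_mul_inv_sub n (s.notMem_erase w)), ?_⟩
    filter_upwards [hfG] with z hz
    simp only [H, hz, ← Finset.add_sum_erase s _ hws]
    ring
  -- `limUnder (𝓝[≠] z) H` fills in the removable singularities of `H` at the zeros of `f`
  have hlim : ∀ {G : 𝕜 → 𝕜} {w : 𝕜}, AnalyticAt 𝕜 G w → H =ᶠ[𝓝[≠] w] G →
      (fun z => limUnder (𝓝[≠] z) H) =ᶠ[𝓝 w] G := fun hG hHG =>
    eventuallyEq_limUnder_nhdsNE (hG.eventually_analyticAt.mono fun _ h => h.continuousAt) hHG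
  refine ⟨fun z => limUnder (𝓝[≠] z) H, fun w hwK => ?_, fun z hzK hzs => ?_⟩
  · by_cases hws : w ∈ s
    · obtain ⟨G, hG, hHG⟩ := hHs w hws
      exact hG.congr (hlim hG hHG).symm
    · exact (hH w hwK hws).congr (hlim (hH w hwK hws) .rfl).symm
  · have hFz : limUnder (𝓝[≠] z) H = H z := (hlim (hH z hzK hzs) .rfl).eq_of_nhds
    simp only [hFz, H, n]
    ring

theorem circleIntegral_logDeriv_sub_eq_two_pi_I_mul_sum {f : ℂ → ℂ} {c : ℂ} {r R : ℝ}
    {s : Finset ℂ} (hr : 0 < r) (hrR : r ≤ R)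
    (hf : AnalyticOnNhd ℂ f (closedBall c R \ ball c r))
    (hr0 : ∀ z ∈ sphere c r, f z ≠ 0) (hR0 : ∀ z ∈ sphere c R, f z ≠ 0)
    (hs : ∀ z, z ∈ s ↔ z ∈ closedBall c R \ ball c r ∧ f z = 0)
    (hord : ∀ z ∈ s, analyticOrderAt f z ≠ ⊤) :
    (∮ z in C(c, R), logDeriv f z) - ∮ z in C(c, r), logDeriv f z =
      2 * π * I * ∑ z ∈ s, (analyticOrderNatAt f z : ℂ) := by
  obtain ⟨F, hF, hlog⟩ := hf.exists_logDeriv_eq_add_sum_mul_inv_sub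
    (fun z hz => ((hs z).1 hz).1) (fun z hz h0 => (hs z).2 ⟨hz, h0⟩) hord
  set Q : ℂ → ℂ := fun z => ∑ b ∈ s, (analyticOrderNatAt f b : ℂ) * (z - b)⁻¹
  have hsplit : ∀ ρ, r ≤ ρ → ρ ≤ R → (∀ z ∈ sphere c ρ, f z ≠ 0) →
      ∮ z in C(c, ρ), logDeriv f z = (∮ z in C(c, ρ), F z) + ∮ z in C(c, ρ), Q z := by
    intro ρ hrρ hρR hρ0
    have hρ : 0 ≤ ρ := hr.le.trans hrρ
    have hA : sphere c ρ ⊆ closedBall c R \ ball c r := fun z hz =>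
      ⟨mem_closedBall.2 ((mem_sphere.1 hz).le.trans hρR),
        fun h => (mem_ball.1 h).not_ge ((mem_sphere.1 hz).ge.trans' hrρ)⟩
    have hns : ∀ z ∈ sphere c ρ, z ∉ s := fun z hz hzs => hρ0 z hz ((hs z).1 hzs).2
    rw [circleIntegral.integral_congr hρ fun z hz => hlog z (hA hz) (hns z hz),
      circleIntegral.integral_add ((hF.continuousOn.mono hA).circleIntegrable hρ)
        (ContinuousOn.circleIntegrable hρ fun z hz =>
          (analyticAt_sum_mul_inv_sub _ (hns z hz)).continuousAt.continuousWithinAt)]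
  have hsA : ∀ b ∈ s, r < dist b c ∧ dist b c < R := by
    intro b hb
    obtain ⟨⟨hbR, hbr⟩, hb0⟩ := (hs b).1 hb
    rw [mem_closedBall] at hbR
    rw [mem_ball, not_lt] at hbr
    exact ⟨hbr.lt_of_ne fun h => hr0 b h.symm hb0, hbR.lt_of_ne fun h => hR0 b h hb0⟩
  have hCauchy : ∮ z in C(c, R), F z = ∮ z in C(c, r), F z :=
    circleIntegral_eq_of_differentiable_on_annulus_off_countable hr hrR countable_empty
      hF.continuousOn fun z hz => (hF z ⟨ball_subset_closedBall hz.1.1,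
        fun h => hz.1.2 (ball_subset_closedBall h)⟩).differentiableAt
  rw [hsplit R hrR le_rfl hR0, hsplit r le_rfl hrR hr0, hCauchy, add_sub_add_left_eq_sub,
    circleIntegral_sum_mul_inv_sub_sub _ hr.le hsA]

theorem circleIntegral_const_mul_comp_mul (g : ℂ → ℂ) (a : ℂ) (R : ℝ) :
    ∮ z in C(0, R), a * g (a * z) = ∮ z in C(0, ‖a‖ * R), g z := by
  have hrot : ∀ θ, a * circleMap 0 R θ = circleMap 0 (‖a‖ * R) (arg a + θ) := fun θ => by
    rw [← circleMap_zero_mul]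
    congr 1
    rw [circleMap_zero, norm_mul_exp_arg_mul_I]
  set F : ℝ → ℂ := fun θ => deriv (circleMap 0 (‖a‖ * R)) θ • g (circleMap 0 (‖a‖ * R) θ)
  have hF : Function.Periodic F (2 * π) := fun θ => by
    simp only [F, deriv_circleMap, periodic_circleMap _ _ θ]
  calc ∮ z in C(0, R), a * g (a * z)
      = ∫ θ in 0..2 * π, F (arg a + θ) := intervalIntegral.integral_congr fun θ _ => by
        simp only [F, deriv_circleMap, smul_eq_mul, ← hrot]
        ring
    _ = ∫ θ in arg a..arg a + 2 * π, F θ := by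
        rw [intervalIntegral.integral_comp_add_left, add_zero]
    _ = ∮ z in C(0, ‖a‖ * R), g z := by
        rw [hF.intervalIntegral_add_eq (arg a) 0, zero_add]
        rfl

theorem mul_logDeriv_comp_mul_eq {𝕜 : Type*} [NontriviallyNormedField 𝕜] {f : 𝕜 → 𝕜}
    {p C z : 𝕜} {k : ℤ} (hC : C ≠ 0) (hz : z ≠ 0) (hfz : f z ≠ 0)
    (hdf : DifferentiableAt 𝕜 f z) (hdfp : DifferentiableAt 𝕜 f (p * z))
    (hfunc : (fun w => f (p * w)) =ᶠ[𝓝 z] fun w => C * w ^ (-k) * f w) :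
    p * logDeriv f (p * z) = logDeriv f z - k / z := by
  have hcomp : logDeriv (fun w => f (p * w)) z = logDeriv f (p * z) * p := by
    simpa [Function.comp_def] using
      logDeriv_comp (g := (p * ·)) hdfp (differentiableAt_id.const_mul p)
  rw [(logDeriv_congr_nhds hfunc).eq_of_nhds,
    logDeriv_mul (f := fun w => C * w ^ (-k)) z (mul_ne_zero hC (zpow_ne_zero _ hz)) hfz
      ((differentiableAt_zpow.2 (.inl hz)).const_mul C) hdf,
    logDeriv_const_mul z C hC, logDeriv_zpow] at hcomp
  rw [mul_comm, ← hcomp]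
  push_cast
  ring

theorem Set.Finite.exists_mem_Ioo_forall_notMem_Ico {T : Set ℝ} (hT : T.Finite) {a r : ℝ}
    (har : a < r) : ∃ ρ ∈ Ioo a r, ∀ t ∈ T, t ∉ Ico ρ r := by
  have hT' : ∀ᶠ ρ in 𝓝[<] r, ∀ t ∈ T, t ∉ Ico ρ r := by
    refine (eventually_all_finite hT).2 fun t _ => ?_
    by_cases htr : t < r
    · filter_upwards [eventually_nhdsWithin_of_eventually_nhds (lt_mem_nhds htr)] with ρ hρ ht
      exact hρ.not_ge ht.1
    · exact .of_forall fun ρ ht => htr ht.2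
  exact (Filter.Eventually.and (Ioo_mem_nhdsLT har) hT').exists

theorem AnalyticOnNhd.finite_inter_preimage_zero {𝕜 E : Type*} [NontriviallyNormedField 𝕜]
    [NormedAddCommGroup E] [NormedSpace 𝕜 E] {f : 𝕜 → E} {K : Set 𝕜}
    (hf : AnalyticOnNhd 𝕜 f K) (hK : IsCompact K) (hord : ∀ z ∈ K, analyticOrderAt f z ≠ ⊤) :
    (K ∩ f ⁻¹' {0}).Finite := by
  refine ((MeromorphicOn.divisor f K).finiteSupport hK).subset fun z ⟨hzK, hz0⟩ => ?_
  rw [Function.mem_support, MeromorphicOn.AnalyticOnNhd.divisor_apply hf hzK]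
  have h0 := analyticOrderAt_ne_zero.2 ⟨hf z hzK, hz0⟩
  lift analyticOrderAt f z to ℕ using hord z hzK with n
  simpa using h0

theorem closedBall_sdiff_ball_subset_compl_zero {E : Type*} [SeminormedAddCommGroup E] {r : ℝ}
    (hr : 0 < r) (R : ℝ) : closedBall (0 : E) R \ ball 0 r ⊆ {0}ᶜ :=
  fun _ hz h => hz.2 (mem_singleton_iff.1 h ▸ mem_ball_self hr)

theorem AnalyticOnNhd.exists_mem_Ioo_forall_ne_zero {f : ℂ → ℂ} (hf : AnalyticOnNhd ℂ f {0}ᶜ)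
    (hord : ∀ z ≠ 0, analyticOrderAt f z ≠ ⊤) {a r : ℝ} (ha : 0 < a) (har : a < r) :
    ∃ ρ ∈ Ioo a r, ∀ z, ρ ≤ ‖z‖ → ‖z‖ < r → f z ≠ 0 := by
  have hK := closedBall_sdiff_ball_subset_compl_zero (E := ℂ) ha r
  have hZ := (hf.mono hK).finite_inter_preimage_zero
    ((isCompact_closedBall 0 r).diff isOpen_ball) fun z hz => hord z (hK hz)
  obtain ⟨ρ, hρ, hT⟩ := (hZ.image (‖·‖)).exists_mem_Ioo_forall_notMem_Ico har
  refine ⟨ρ, hρ, fun z hρz hzr hz0 => hT ‖z‖ ⟨z, ⟨?_, hz0⟩, rfl⟩ ⟨hρz, hzr⟩⟩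
  simp only [Set.mem_sdiff, mem_closedBall_zero_iff, mem_ball_zero_iff, not_lt]
  exact ⟨hzr.le, hρ.1.le.trans hρz⟩

structure IsThetaFunction (p C : ℂ) (k : ℤ) (f : ℂ → ℂ) : Prop where
  analyticOnNhd : AnalyticOnNhd ℂ f {0}ᶜ
  apply_mul : ∀ z ≠ 0, f (p * z) = C * z ^ (-k) * f z

namespace IsThetaFunction

variable {p C : ℂ} {k : ℤ} {f : ℂ → ℂ}

theorem apply_mul_eq_zero_iff (hf : IsThetaFunction p C k f) (hC : C ≠ 0) {z : ℂ} (hz : z ≠ 0) :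
    f (p * z) = 0 ↔ f z = 0 := by
  rw [hf.apply_mul z hz, mul_eq_zero_iff_left (mul_ne_zero hC (zpow_ne_zero _ hz))]

theorem circleIntegral_logDeriv_sub (hf : IsThetaFunction p C k f) (hp : p ≠ 0) (hC : C ≠ 0)
    {ρ : ℝ} (hρ : 0 < ρ) (hf0 : ∀ z ∈ sphere 0 ρ, f z ≠ 0) :
    (∮ z in C(0, ρ), logDeriv f z) - ∮ z in C(0, ‖p‖ * ρ), logDeriv f z = 2 * π * I * k := by
  have hne : ∀ z ∈ sphere (0 : ℂ) ρ, z ≠ 0 := fun z hz h => by simp [h, hρ.ne] at hz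
  rw [← circleIntegral_const_mul_comp_mul,
    circleIntegral.integral_congr hρ.le fun z hz => mul_logDeriv_comp_mul_eq hC (hne z hz)
      (hf0 z hz) (hf.analyticOnNhd z (hne z hz)).differentiableAt
      (hf.analyticOnNhd _ (mul_ne_zero hp (hne z hz))).differentiableAt
      (eventually_ne_nhds (hne z hz) |>.mono hf.apply_mul)]
  have hlog : CircleIntegrable (logDeriv f) 0 ρ := ContinuousOn.circleIntegrable hρ.le
    fun z hz => ((hf.analyticOnNhd z (hne z hz)).deriv.div (hf.analyticOnNhd z (hne z hz))
      (hf0 z hz)).continuousAt.continuousWithinAt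
  have hinv : ∮ z in C(0, ρ), (k : ℂ) / z = 2 * π * I * k := by
    simp_rw [div_eq_mul_inv]
    rw [circleIntegral.integral_const_mul]
    simpa [mul_comm] using congrArg ((k : ℂ) * ·) (circleIntegral.integral_sub_center_inv 0 hρ.ne')
  have hk : CircleIntegrable (fun z : ℂ => (k : ℂ) / z) 0 ρ :=
    ContinuousOn.circleIntegrable hρ.le fun z hz =>
      (continuousAt_const.div continuousAt_id (hne z hz)).continuousWithinAt
  rw [circleIntegral.integral_sub hlog hk, hinv, sub_sub_cancel]

theorem exists_radius_forall_zero_iff (hf : IsThetaFunction p C k f) (hp0 : 0 < ‖p‖)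
    (hp1 : ‖p‖ < 1) (hC : C ≠ 0) (hord : ∀ z ≠ 0, analyticOrderAt f z ≠ ⊤) {r : ℝ}
    (hr : 0 < r) :
    ∃ R > 0, (∀ z ∈ sphere 0 (‖p‖ * R), f z ≠ 0) ∧ (∀ z ∈ sphere 0 R, f z ≠ 0) ∧
      ∀ z, z ∈ closedBall 0 R \ ball 0 (‖p‖ * R) ∧ f z = 0 ↔
        r ≤ ‖z‖ ∧ ‖z‖ < r / ‖p‖ ∧ f z = 0 := by
  obtain ⟨ρ, ⟨hpρ, hρr⟩, hgap⟩ := hf.analyticOnNhd.exists_mem_Ioo_forall_ne_zero hord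
    (mul_pos hp0 hr) (mul_lt_of_lt_one_left hr hp1)
  have hρ : 0 < ρ := (mul_pos hp0 hr).trans hpρ
  set R := ρ / ‖p‖
  have hρR : ρ ≤ R := le_div_self hρ.le hp0 hp1.le
  have hRr : R < r / ‖p‖ := div_lt_div_of_pos_right hρr hp0
  -- multiplication by `p` maps the zeros of modulus in `[R, r / ‖p‖)` to zeros in `[ρ, r)`
  have hshift : ∀ z, R ≤ ‖z‖ → ‖z‖ < r / ‖p‖ → f z ≠ 0 := fun z hRz hzr hz0 => by
    have hz : z ≠ 0 := norm_pos_iff.1 (hρ.trans_le (hρR.trans hRz))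
    refine hgap (p * z) ?_ ?_ ((hf.apply_mul_eq_zero_iff hC hz).2 hz0) <;> rw [norm_mul]
    · exact mul_div_cancel₀ ρ hp0.ne' ▸ mul_le_mul_of_nonneg_left hRz hp0.le
    · exact (lt_div_iff₀' hp0).1 hzr
  refine ⟨R, hρ.trans_le hρR, ?_⟩
  rw [mul_div_cancel₀ ρ hp0.ne']
  refine ⟨fun z hz => ?_, fun z hz => ?_, fun z => ?_⟩
  · rw [mem_sphere_zero_iff_norm] at hz
    exact hgap z hz.ge (hz.trans_lt hρr)
  · rw [mem_sphere_zero_iff_norm] at hz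
    exact hshift z hz.ge (hz.trans_lt hRr)
  simp only [Set.mem_sdiff, mem_closedBall_zero_iff, mem_ball_zero_iff, not_lt]
  constructor
  · rintro ⟨⟨hzR, hρz⟩, hz0⟩
    exact ⟨not_lt.1 fun hzr => hgap z hρz hzr hz0, hzR.trans_lt hRr, hz0⟩
  · rintro ⟨hrz, hzr, hz0⟩
    exact ⟨⟨not_lt.1 fun hRz => hshift z hRz.le hzr hz0, hρr.le.trans hrz⟩, hz0⟩

theorem exists_finset_sum_analyticOrderNatAt_eq (hf : IsThetaFunction p C k f) (hp0 : 0 < ‖p‖)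
    (hp1 : ‖p‖ < 1) (hC : C ≠ 0) (hord : ∀ z ≠ 0, analyticOrderAt f z ≠ ⊤) {r : ℝ}
    (hr : 0 < r) :
    ∃ s : Finset ℂ, (∀ z, z ∈ s ↔ r ≤ ‖z‖ ∧ ‖z‖ < r / ‖p‖ ∧ f z = 0) ∧
      ∑ z ∈ s, (analyticOrderNatAt f z : ℤ) = k := by
  obtain ⟨R, hR, hinner, houter, hzeros⟩ := hf.exists_radius_forall_zero_iff hp0 hp1 hC hord hr
  have hK := closedBall_sdiff_ball_subset_compl_zero (E := ℂ) (mul_pos hp0 hR) R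
  have hZ := (hf.analyticOnNhd.mono hK).finite_inter_preimage_zero
    ((isCompact_closedBall 0 R).diff isOpen_ball) fun z hz => hord z (hK hz)
  refine ⟨hZ.toFinset, fun z => by rw [Finite.mem_toFinset, ← hzeros]; rfl, ?_⟩
  have hcount := circleIntegral_logDeriv_sub_eq_two_pi_I_mul_sum (mul_pos hp0 hR)
    (mul_le_of_le_one_left hR.le hp1.le) (hf.analyticOnNhd.mono hK) hinner houter
    (fun z => hZ.mem_toFinset) fun z hz => hord z (hK (hZ.mem_toFinset.1 hz).1)
  have hshift := hf.circleIntegral_logDeriv_sub (norm_pos_iff.1 hp0) hC hR houter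
  rw [hcount] at hshift
  exact_mod_cast mul_left_cancel₀ two_pi_I_ne_zero hshift

end IsThetaFunction

theorem theta_function_zero_count (p C : ℂ) (k : ℤ) (f : ℂ → ℂ)
    (hp0 : 0 < ‖p‖) (hp1 : ‖p‖ < 1) (hC : C ≠ 0)
    (hfa : ∀ z : ℂ, z ≠ 0 → AnalyticAt ℂ f z)
    (hfunc : ∀ z : ℂ, z ≠ 0 → f (p * z) = C * z ^ (-k) * f z)
    (hne : ∃ z : ℂ, z ≠ 0 ∧ f z ≠ 0) :
    0 ≤ k ∧ (k = 0 → ∀ z : ℂ, z ≠ 0 → f z ≠ 0) ∧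
      ∀ r : ℝ, 0 < r →
        ∃ s : Finset ℂ,
          (∀ z : ℂ, z ∈ s ↔ (r ≤ ‖z‖ ∧ ‖z‖ < r / ‖p‖ ∧ f z = 0)) ∧
          (∑ z ∈ s, (if h : z ≠ 0 then ((analyticOrderAt f z).toNat) else 0)) = k.toNat := by
  have hf : IsThetaFunction p C k f := ⟨hfa, hfunc⟩
  obtain ⟨z₀, hz₀, hfz₀⟩ := hne
  have hord : ∀ z ≠ 0, analyticOrderAt f z ≠ ⊤ := fun z hz =>
    hf.analyticOnNhd.analyticOrderAt_ne_top_of_isPreconnected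
      (isConnected_compl_singleton_of_one_lt_rank (by simp) 0).isPreconnected hz₀ hz
      (by rw [analyticOrderAt_eq_zero.2 (.inr hfz₀)]; exact ENat.zero_ne_top)
  have hcount := fun r (hr : 0 < r) =>
    hf.exists_finset_sum_analyticOrderNatAt_eq hp0 hp1 hC hord hr
  have hk : 0 ≤ k := by
    obtain ⟨s, -, hs⟩ := hcount 1 one_pos
    exact hs ▸ Finset.sum_nonneg fun _ _ => by positivity
  refine ⟨hk, fun hk0 z hz hfz => ?_, fun r hr => ?_⟩
  · obtain ⟨s, hs, hsum⟩ := hcount ‖z‖ (norm_pos_iff.2 hz)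
    have hzs : z ∈ s := (hs z).2
      ⟨le_rfl, (lt_div_iff₀ hp0).2 (mul_lt_of_lt_one_right (norm_pos_iff.2 hz) hp1), hfz⟩
    have hpos : analyticOrderNatAt f z ≠ 0 := fun h =>
      (ENat.toNat_eq_zero.1 h).elim (analyticOrderAt_ne_zero.2 ⟨hfa z hz, hfz⟩) (hord z hz)
    have := Finset.single_le_sum (f := fun z => (analyticOrderNatAt f z : ℤ))
      (fun _ _ => by positivity) hzs
    omega
  · obtain ⟨s, hs, hsum⟩ := hcount r hr
    refine ⟨s, hs, ?_⟩
    rw [Finset.sum_congr rfl fun z hz => dif_pos (norm_pos_iff.1 (hr.trans_le ((hs z).1 hz).1)),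
      ← hsum, ← Nat.cast_sum, Int.toNat_natCast]
    rfl
end

section
/- (Hilbert 90 specialization) Let L/K be a quadratic field extension with nontrivial K-automorphism x ↦ x̄ of L, and let A ∈ GL_n(L) satisfy Ā·A = I, where Ā denotes entrywise conjugation. Then there exists B ∈ GL_n(L) with A = B̄·B^{−1}. -/
/-!
Since `L/K` has degree `2`, `σ` is an involution, so `T x = Ā σ(x)` is a `σ`-semilinear involution
of `Lⁿ` (as `Ā A = 1`). Its fixed vectors span `Lⁿ` over `L`: picking `a` with `σ a ≠ a`, every `x`
is an `L`-combination of the fixed vectors `x + T x` and `a x + T (a x)`. A basis of fixed vectors,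
taken as the columns of `B`, gives `Ā B̄ = B`, i.e. `A B = B̄`.
-/

theorem AlgEquiv.involutive_of_finrank_eq_two {K L : Type*} [Field K] [Field L] [Algebra K L]
    (hrank : Module.finrank K L = 2) (σ : L ≃ₐ[K] L) : Function.Involutive σ := by
  have : FiniteDimensional K L := Module.finite_of_finrank_pos (by omega)
  have horder : orderOf σ ≤ 2 := hrank ▸ orderOf_le_card_univ.trans AlgEquiv.card_le
  have hσ2 : σ ^ 2 = 1 := by
    interval_cases h : orderOf σ
    · exact absurd h (orderOf_pos σ).ne'
    · rw [orderOf_eq_one_iff.1 h, one_pow]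
    · rw [← h, pow_orderOf_eq_one]
  exact fun x => congr($hσ2 x)

theorem LinearMap.span_fixedPoints_eq_top_of_involutive {L M : Type*} [DivisionRing L]
    [AddCommGroup M] [Module L M] {σ : L →+* L} (hσ : σ ≠ RingHom.id L) (T : M →ₛₗ[σ] M)
    (hT : Function.Involutive T) : Submodule.span L (Function.fixedPoints T) = ⊤ := by
  obtain ⟨a, ha⟩ : ∃ a, σ a ≠ a := by
    by_contra! h
    exact hσ (RingHom.ext h)
  have add_apply_mem : ∀ x, x + T x ∈ Function.fixedPoints T := fun x => by
    simp [Function.IsFixedPt, hT x, add_comm]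
  refine Submodule.eq_top_iff'.2 fun x => ?_
  have hx : x = (σ a - a)⁻¹ • (σ a • (x + T x) - (a • x + T (a • x))) := by
    rw [map_smulₛₗ, smul_add, add_sub_add_right_eq_sub, ← sub_smul,
      inv_smul_smul₀ (sub_ne_zero.2 ha)]
  rw [hx]
  exact Submodule.smul_mem _ _ <| Submodule.sub_mem _
    (Submodule.smul_mem _ _ (Submodule.subset_span (add_apply_mem x)))
    (Submodule.subset_span (add_apply_mem (a • x)))

namespace Matrix

variable {L n : Type*} [Field L] [Fintype n]

def mulVecSemilinear (σ : L →+* L) (M : Matrix n n L) : (n → L) →ₛₗ[σ] (n → L) where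
  toFun x := M *ᵥ (σ ∘ x)
  map_add' x y := by rw [← mulVec_add]; congr 1; ext; simp
  map_smul' a x := by rw [← mulVec_smul]; congr 1; ext; simp

@[simp]
theorem mulVecSemilinear_apply (σ : L →+* L) (M : Matrix n n L) (x : n → L) :
    M.mulVecSemilinear σ x = M *ᵥ (σ ∘ x) := rfl

variable [DecidableEq n]

theorem mulVecSemilinear_involutive {σ : L →+* L} (hσ : Function.Involutive σ)
    {M : Matrix n n L} (hM : M * M.map σ = 1) : Function.Involutive (M.mulVecSemilinear σ) :=
  fun x => by
    have : σ ∘ (M *ᵥ (σ ∘ x)) = M.map σ *ᵥ x := by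
      ext i
      simp [mulVec, dotProduct, hσ _]
    simp [this, mulVec_mulVec, hM]

theorem exists_isUnit_mul_map_eq_self {σ : L →+* L} (hσ : Function.Involutive σ)
    (hσ1 : σ ≠ RingHom.id L) {M : Matrix n n L} (hM : M * M.map σ = 1) :
    ∃ B : Matrix n n L, IsUnit B ∧ M * B.map σ = B := by
  have hspan := (LinearMap.span_fixedPoints_eq_top_of_involutive hσ1 _
    (mulVecSemilinear_involutive hσ hM)).ge
  let b := Module.Basis.ofSpan hspan
  let c := b.reindex (b.indexEquiv (Pi.basisFun L n))
  have hc : ∀ j, M.mulVecSemilinear σ (c j) = c j := fun j =>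
    Module.Basis.ofSpan_subset hspan ⟨_, (b.reindex_apply _ j).symm⟩
  let _ := (Pi.basisFun L n).invertibleToMatrix c
  refine ⟨(Pi.basisFun L n).toMatrix c, isUnit_of_invertible _, ?_⟩
  ext i j
  simpa [Module.Basis.toMatrix_apply, mul_apply, mulVec, dotProduct] using congrFun (hc j) i

end Matrix

theorem hilbert90_matrices_general (K L : Type*) [Field K] [Field L] [Algebra K L]
    (hrank : Module.finrank K L = 2)
    (σ : L ≃ₐ[K] L) (hσ : σ ≠ AlgEquiv.refl)
    (n : ℕ) (A : Matrix (Fin n) (Fin n) L)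
    (hAA : A.map σ * A = 1) :
    ∃ B : Matrix (Fin n) (Fin n) L, ∃ Binv : Matrix (Fin n) (Fin n) L,
      B * Binv = 1 ∧ Binv * B = 1 ∧ A = B.map σ * Binv := by
  have hinv := σ.involutive_of_finrank_eq_two hrank
  have hσ1 : (σ : L →+* L) ≠ RingHom.id L := fun h => hσ (AlgEquiv.ext fun x => congr($h x))
  have hA : A.map σ * (A.map σ).map σ = 1 := by
    rwa [Matrix.map_map, hinv.comp_self, Matrix.map_id]
  obtain ⟨B, hB, hAB⟩ := Matrix.exists_isUnit_mul_map_eq_self hinv hσ1 hA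
  have hdet : IsUnit B.det := (Matrix.isUnit_iff_isUnit_det B).1 hB
  refine ⟨B, B⁻¹, B.mul_nonsing_inv hdet, B.nonsing_inv_mul hdet, ?_⟩
  have hAB' : A * B = B.map σ := by
    simpa [Matrix.map_mul, Matrix.map_map, hinv.comp_self] using congr(($hAB).map σ)
  rw [← hAB', Matrix.mul_nonsing_inv_cancel_right _ _ hdet]

theorem hilbert90_matrices (K L : Type*) [Field K] [Field L] [Algebra K L]
    [IsGalois K L] (hrank : Module.finrank K L = 2)
    (σ : L ≃ₐ[K] L) (hσ : σ ≠ AlgEquiv.refl)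
    (n : ℕ) (A : Matrix (Fin n) (Fin n) L) (hA : IsUnit A)
    (hAA : A.map σ * A = 1) :
    ∃ B : Matrix (Fin n) (Fin n) L, ∃ Binv : Matrix (Fin n) (Fin n) L,
      B * Binv = 1 ∧ Binv * B = 1 ∧ A = B.map σ * Binv :=
  hilbert90_matrices_general K L hrank σ hσ n A hAA
end

section
/- Let C(z) be a 2×2 matrix of elliptic functions (meromorphic on ℂ* with C(pz)=C(z)), holomorphic except for at most simple poles at three points a, b, c (mod p^ℤ), such that the residue matrix at a has both image and kernel spanned by (1,1), at b by (0,1), and at c by (1,0). Then C is constant. If moreover C preserves the three lines span(1,1), span(0,1), span(1,0), then C is a scalar multiple of the identity. -/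
open Filter Topology Set Metric Complex Real

/-!
Each entry `f` of `C` is `p`-invariant on `ℂ*`, with at worst simple poles on the orbits `p^ℤ a`,
`p^ℤ b`, `p^ℤ c`. Once its removable singularities are filled in, `f(z)/z` has the same integral
over the two boundary circles of an annulus `‖p‖R ≤ |z| ≤ R`, because `z ↦ pz` maps one circle
onto the other. Choosing `R` so that the annulus meets a given orbit in a single interior point,
the residue theorem shows: if only one of the three orbits can carry a pole of `f`, the residue of
`f` there vanishes. By the shape of the residue matrices, the entry `(0,0)` can only have a pole
at `a`, which forces `Ra = 0`; then `(1,0)` forces `Rb = 0`, and `(0,1)` forces `Rc = 0`.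
Without residues every entry is holomorphic and `p`-invariant on `ℂ*`, hence bounded by its
maximum on a compact fundamental annulus, so it extends across `0` and is constant by Liouville.
Finally, a matrix with the three eigenvectors `(1,0)`, `(0,1)`, `(1,1)` is scalar.
-/

theorem apply_zpow_mul_eq_of_apply_mul_eq {M₀ α : Type*} [GroupWithZero M₀] {p : M₀}
    {f : M₀ → α} (hp : p ≠ 0) (hf : ∀ z ≠ 0, f (p * z) = f z) (n : ℤ) {z : M₀} (hz : z ≠ 0) :
    f (p ^ n * z) = f z := by
  induction n using Int.induction_on generalizing z with
  | zero => simp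
  | succ n ih => rw [zpow_add_one₀ hp, mul_assoc, ih (mul_ne_zero hp hz), hf z hz]
  | pred n ih =>
    rw [zpow_sub_one₀ hp, mul_assoc, ih (mul_ne_zero (inv_ne_zero hp) hz)]
    simpa [mul_inv_cancel_left₀ hp] using (hf _ (mul_ne_zero (inv_ne_zero hp) hz)).symm

theorem eventually_nhdsNE_ne {X : Type*} [TopologicalSpace X] [T1Space X] (z x : X) :
    ∀ᶠ w in 𝓝[≠] z, w ≠ x := by
  rcases eq_or_ne z x with rfl | h
  · exact self_mem_nhdsWithin
  · exact eventually_ne_nhdsWithin h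

theorem int_eq_zero_of_lt_zpow_of_zpow_lt_inv {q : ℝ} (hq0 : 0 < q) (hq1 : q < 1) {n : ℤ}
    (h₁ : q < q ^ n) (h₂ : q ^ n < q⁻¹) : n = 0 := by
  rw [← zpow_neg_one] at h₂
  nth_rw 1 [← zpow_one q] at h₁
  rw [zpow_lt_zpow_iff_right_of_lt_one₀ hq0 hq1] at h₁ h₂
  omega

def zpowOrbit (p x : ℂ) : Set ℂ := {z | ∃ n : ℤ, z = p ^ n * x}

theorem self_mem_zpowOrbit (p x : ℂ) : x ∈ zpowOrbit p x := ⟨0, by simp⟩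

section Orbit

variable {p : ℂ}

theorem eq_of_mem_zpowOrbit (hp : p ≠ 0) (hp1 : ‖p‖ < 1) {x w w' : ℂ}
    (hw : w ∈ zpowOrbit p x) (hw' : w' ∈ zpowOrbit p x)
    (h₁ : ‖p‖ * ‖w‖ < ‖w'‖) (h₂ : ‖w'‖ < ‖w‖ / ‖p‖) : w' = w := by
  obtain ⟨n, rfl⟩ := hw
  obtain ⟨m, rfl⟩ := hw'
  have hq0 : 0 < ‖p‖ := norm_pos_iff.2 hp
  have hx : 0 < ‖x‖ := by
    by_contra! h
    simp [norm_le_zero_iff.1 h] at h₁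
  have hc : 0 < ‖p ^ n * x‖ := by rw [norm_mul, norm_zpow]; positivity
  have hm : ‖p ^ m * x‖ = ‖p‖ ^ (m - n) * ‖p ^ n * x‖ := by
    rw [norm_mul, norm_mul, norm_zpow, norm_zpow, ← mul_assoc, ← zpow_add₀ hq0.ne', sub_add_cancel]
  rw [hm] at h₁ h₂
  rw [div_eq_inv_mul] at h₂
  have := int_eq_zero_of_lt_zpow_of_zpow_lt_inv hq0 hp1 (lt_of_mul_lt_mul_right h₁ hc.le)
    (lt_of_mul_lt_mul_right h₂ hc.le)
  rw [sub_eq_zero.1 this]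

theorem eventually_nhdsNE_notMem_zpowOrbit (hp : p ≠ 0) (hp1 : ‖p‖ < 1) (x : ℂ) {z : ℂ}
    (hz : z ≠ 0) : ∀ᶠ w in 𝓝[≠] z, w ∉ zpowOrbit p x := by
  have hq0 : 0 < ‖p‖ := norm_pos_iff.2 hp
  obtain ⟨r, hr₁, hr₂⟩ : ∃ r, ‖p‖ * ‖z‖ < r ∧ r < ‖z‖ :=
    exists_between (mul_lt_of_lt_one_left (norm_pos_iff.2 hz) hp1)
  set A : Set ℂ := {w | r < ‖w‖ ∧ ‖w‖ < r / ‖p‖}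
  have hA : A ∈ 𝓝 z :=
    ((isOpen_lt continuous_const continuous_norm).inter
      (isOpen_lt continuous_norm continuous_const)).mem_nhds
      ⟨hr₂, show ‖z‖ < r / ‖p‖ by rwa [lt_div_iff₀ hq0, mul_comm]⟩
  have hsub : (zpowOrbit p x ∩ A).Subsingleton := by
    rintro w ⟨hw, hwA⟩ w' ⟨hw', hw'A⟩
    refine (eq_of_mem_zpowOrbit hp hp1 hw hw' ?_ ?_).symm
    · calc ‖p‖ * ‖w‖ < ‖p‖ * (r / ‖p‖) := by gcongr; exact hwA.2
        _ = r := by field_simp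
        _ < ‖w'‖ := hw'A.1
    · calc ‖w'‖ < r / ‖p‖ := hw'A.2
        _ < ‖w‖ / ‖p‖ := by gcongr; exact hwA.1
  have hF : ((zpowOrbit p x ∩ A) \ {z})ᶜ ∈ 𝓝 z :=
    hsub.finite.sdiff.isClosed.compl_mem_nhds fun h => h.2 rfl
  filter_upwards [nhdsWithin_le_nhds hA, nhdsWithin_le_nhds hF, self_mem_nhdsWithin]
    with w hwA hwF hwz hw
  exact hwF ⟨⟨hw, hwA⟩, hwz⟩

end Orbit

/-- `f` has at most a simple pole at `z`, with residue `ρ` (`ρ = 0` allows a removable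
singularity). -/
def HasResidueAt (f : ℂ → ℂ) (z ρ : ℂ) : Prop :=
  Tendsto (fun w => (w - z) * f w) (𝓝[≠] z) (𝓝 ρ)

section Residue

variable {f g : ℂ → ℂ} {z ρ : ℂ}

theorem HasResidueAt.congr (h : HasResidueAt f z ρ) (hfg : f =ᶠ[𝓝[≠] z] g) :
    HasResidueAt g z ρ :=
  Tendsto.congr' (hfg.mono fun w hw => by rw [hw]) h

theorem ContinuousAt.hasResidueAt_zero (h : ContinuousAt f z) : HasResidueAt f z 0 := by
  have : Tendsto (fun w => (w - z) * f w) (𝓝 z) (𝓝 ((z - z) * f z)) :=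
    ((continuousAt_id.sub continuousAt_const).mul h).tendsto
  simpa [HasResidueAt] using this.mono_left nhdsWithin_le_nhds

theorem HasResidueAt.sub_mul_inv (h : HasResidueAt f z ρ) :
    HasResidueAt (fun w => f w - ρ * (w - z)⁻¹) z 0 := by
  have : Tendsto (fun w => (w - z) * f w - ρ) (𝓝[≠] z) (𝓝 0) := by
    simpa using h.sub_const ρ
  refine this.congr' (eventually_nhdsWithin_of_forall fun w hw => ?_)
  have : w - z ≠ 0 := sub_ne_zero.2 hw
  field_simp

theorem HasResidueAt.isLittleO (h : HasResidueAt f z 0) :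
    (fun w => f w - f z) =o[𝓝[≠] z] fun w => (w - z)⁻¹ := by
  have hz : Tendsto (fun w => w - z) (𝓝[≠] z) (𝓝 0) :=
    tendsto_sub_nhds_zero_iff.2 nhdsWithin_le_nhds
  have hlim : Tendsto (fun w => (w - z) * f w - (w - z) * f z) (𝓝[≠] z) (𝓝 0) := by
    simpa using h.sub (hz.mul_const (f z))
  rw [Asymptotics.isLittleO_iff_tendsto']
  · refine hlim.congr' (eventually_nhdsWithin_of_forall fun w hw => ?_)
    have : w - z ≠ 0 := sub_ne_zero.2 hw
    field_simp
  · exact eventually_nhdsWithin_of_forall fun w hw h0 =>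
      absurd (inv_eq_zero.1 h0) (sub_ne_zero.2 hw)

theorem hasResidueAt_mul_iff {p : ℂ} (hp : p ≠ 0) (hper : ∀ z ≠ 0, f (p * z) = f z) :
    HasResidueAt f (p * z) (p * ρ) ↔ HasResidueAt f z ρ := by
  have hmap : map (p * ·) (𝓝[≠] z) = 𝓝[≠] (p * z) :=
    (Homeomorph.mulLeft₀ p hp).map_punctured_nhds_eq z
  rw [HasResidueAt, HasResidueAt, ← hmap, tendsto_map'_iff,
    ← tendsto_const_smul_iff₀ hp (f := fun w => (w - z) * f w)]
  refine tendsto_congr' ?_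
  filter_upwards [eventually_nhdsNE_ne z 0] with w hw
  rw [Function.comp_apply, hper w hw, smul_eq_mul]
  ring

end Residue

/-- `f` with its removable singularities filled in; `limUnder` returns junk where the punctured
limit does not exist. -/
noncomputable def puncturedLim (f : ℂ → ℂ) (z : ℂ) : ℂ :=
  limUnder (𝓝[≠] z) f

section PuncturedLim

variable {f : ℂ → ℂ} {z : ℂ}

theorem ContinuousAt.puncturedLim_eq (h : ContinuousAt f z) : puncturedLim f z = f z :=
  h.continuousWithinAt.tendsto.limUnder_eq

theorem puncturedLim_eventuallyEq (hd : ∀ᶠ w in 𝓝[≠] z, DifferentiableAt ℂ f w) :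
    puncturedLim f =ᶠ[𝓝[≠] z] f :=
  hd.mono fun _ hw => hw.continuousAt.puncturedLim_eq

theorem differentiableAt_puncturedLim (hd : ∀ᶠ w in 𝓝[≠] z, DifferentiableAt ℂ f w)
    (h : HasResidueAt f z 0) : DifferentiableAt ℂ (puncturedLim f) z := by
  rw [eventually_nhdsWithin_iff] at hd
  have hupd := Complex.differentiableOn_update_limUnder_of_isLittleO hd
    (fun w hw => (hw.1 hw.2).differentiableWithinAt) h.isLittleO
  refine (hupd.differentiableAt hd).congr_of_eventuallyEq ?_
  filter_upwards [hd] with w hw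
  rcases eq_or_ne w z with rfl | hne
  · simp [puncturedLim]
  · rw [Function.update_of_ne hne, (hw hne).continuousAt.puncturedLim_eq]

theorem puncturedLim_mul {p : ℂ} (hp : p ≠ 0) (hper : ∀ z ≠ 0, f (p * z) = f z) :
    puncturedLim f (p * z) = puncturedLim f z := by
  have hmap : map (p * ·) (𝓝[≠] z) = 𝓝[≠] (p * z) :=
    (Homeomorph.mulLeft₀ p hp).map_punctured_nhds_eq z
  rw [puncturedLim, puncturedLim, limUnder, limUnder, ← hmap, map_map]
  congr 1
  exact map_congr ((eventually_nhdsNE_ne z 0).mono hper)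

end PuncturedLim

theorem circleAverage_comp_mul_left {E : Type*} [NormedAddCommGroup E] [NormedSpace ℝ E]
    (f : ℂ → E) (p : ℂ) (r : ℝ) :
    circleAverage (fun z => f (p * z)) 0 r = circleAverage f 0 (‖p‖ * r) := by
  have hp : circleMap 0 ‖p‖ (arg p) = p := by rw [circleMap_zero, norm_mul_exp_arg_mul_I]
  rw [circleAverage_def, circleAverage_eq_integral_add (arg p)]
  congr 2 with θ
  rw [add_comm, ← circleMap_zero_mul, hp]

section Annulus

variable {U : Set ℂ} {x : ℂ} {r R : ℝ}

theorem circleIntegral_eq_of_hasResidueAt_zero {h : ℂ → ℂ} (hr : 0 < r) (hrx : r < ‖x‖)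
    (hxR : ‖x‖ < R) (hU : IsOpen U) (hAU : closedBall 0 R \ ball 0 r ⊆ U)
    (hh : ∀ z ∈ U, z ≠ x → DifferentiableAt ℂ h z) (hres : HasResidueAt h x 0) :
    (∮ z in C(0, R), h z) = ∮ z in C(0, r), h z := by
  have hH : ∀ z ∈ U, DifferentiableAt ℂ (puncturedLim h) z := by
    intro z hz
    refine differentiableAt_puncturedLim ?_ ?_
    · filter_upwards [nhdsWithin_le_nhds (hU.mem_nhds hz), eventually_nhdsNE_ne z x]
        with w hwU hwx using hh w hwU hwx
    · rcases eq_or_ne z x with rfl | hzx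
      · exact hres
      · exact (hh z hz hzx).continuousAt.hasResidueAt_zero
  have hsphere : ∀ s, s = r ∨ s = R → EqOn (puncturedLim h) h (sphere 0 s) := by
    rintro s hs z hz
    rw [mem_sphere_zero_iff_norm] at hz
    refine (hh z (hAU ?_) ?_).continuousAt.puncturedLim_eq
    · simp only [Set.mem_sdiff, mem_closedBall_zero_iff, mem_ball_zero_iff, not_lt]
      rcases hs with rfl | rfl <;> constructor <;> linarith
    · rintro rfl
      rcases hs with rfl | rfl <;> linarith
  calc (∮ z in C(0, R), h z) = ∮ z in C(0, R), puncturedLim h z :=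
        (circleIntegral.integral_congr (by linarith) (hsphere R (.inr rfl))).symm
    _ = ∮ z in C(0, r), puncturedLim h z :=
        Complex.circleIntegral_eq_of_differentiable_on_annulus_off_countable hr (by linarith)
          countable_empty (fun z hz => (hH z (hAU hz)).continuousAt.continuousWithinAt)
          fun z hz => hH z (hAU ⟨ball_subset_closedBall hz.1.1,
            fun hz' => hz.1.2 (ball_subset_closedBall hz')⟩)
    _ = ∮ z in C(0, r), h z := circleIntegral.integral_congr hr.le (hsphere r (.inl rfl))

theorem circleIntegral_sub_inv_eq_zero_of_lt_norm (hr : 0 ≤ r) (hx : r < ‖x‖) :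
    (∮ z in C(0, r), (z - x)⁻¹) = 0 := by
  have hd : ∀ z ∈ closedBall (0 : ℂ) r, DifferentiableAt ℂ (fun z => (z - x)⁻¹) z := by
    intro z hz
    refine (differentiableAt_id.sub_const x).inv (sub_ne_zero.2 ?_)
    rintro rfl
    exact (mem_closedBall_zero_iff.1 hz).not_gt hx
  exact Complex.circleIntegral_eq_zero_of_differentiable_on_off_countable hr countable_empty
    (fun z hz => (hd z hz).continuousAt.continuousWithinAt)
    fun z hz => hd z (ball_subset_closedBall hz.1)

theorem circleIntegral_sub_circleIntegral_eq_of_hasResidueAt {g : ℂ → ℂ} {σ : ℂ} (hr : 0 < r)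
    (hrx : r < ‖x‖) (hxR : ‖x‖ < R) (hU : IsOpen U) (hAU : closedBall 0 R \ ball 0 r ⊆ U)
    (hg : ∀ z ∈ U, z ≠ x → DifferentiableAt ℂ g z) (hres : HasResidueAt g x σ) :
    (∮ z in C(0, R), g z) - ∮ z in C(0, r), g z = 2 * π * I * σ := by
  have hpole : ∀ z, z ≠ x → DifferentiableAt ℂ (fun z => σ * (z - x)⁻¹) z := fun z hzx =>
    ((differentiableAt_id.sub_const x).inv (sub_ne_zero.2 hzx)).const_mul σ
  have hint : ∀ s, s = r ∨ s = R →
      CircleIntegrable g 0 s ∧ CircleIntegrable (fun z => σ * (z - x)⁻¹) 0 s := by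
    rintro s hs
    have hsU : ∀ z ∈ sphere (0 : ℂ) s, z ∈ U ∧ z ≠ x := by
      intro z hz
      rw [mem_sphere_zero_iff_norm] at hz
      refine ⟨hAU ?_, ?_⟩
      · simp only [Set.mem_sdiff, mem_closedBall_zero_iff, mem_ball_zero_iff, not_lt]
        rcases hs with rfl | rfl <;> constructor <;> linarith
      · rintro rfl
        rcases hs with rfl | rfl <;> linarith
    have hs0 : 0 ≤ s := by rcases hs with rfl | rfl <;> linarith
    exact ⟨ContinuousOn.circleIntegrable hs0 fun z hz =>
        (hg z (hsU z hz).1 (hsU z hz).2).continuousAt.continuousWithinAt,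
      ContinuousOn.circleIntegrable hs0 fun z hz =>
        (hpole z (hsU z hz).2).continuousAt.continuousWithinAt⟩
  have hcauchy := circleIntegral_eq_of_hasResidueAt_zero (h := fun z => g z - σ * (z - x)⁻¹)
    hr hrx hxR hU hAU (fun z hz hzx => (hg z hz hzx).sub (hpole z hzx)) hres.sub_mul_inv
  rw [circleIntegral.integral_sub (hint R (.inr rfl)).1 (hint R (.inr rfl)).2,
    circleIntegral.integral_sub (hint r (.inl rfl)).1 (hint r (.inl rfl)).2,
    circleIntegral.integral_const_mul, circleIntegral.integral_const_mul,
    circleIntegral.integral_sub_inv_of_mem_ball (mem_ball_zero_iff.2 hxR),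
    circleIntegral_sub_inv_eq_zero_of_lt_norm hr.le hrx] at hcauchy
  linear_combination hcauchy

end Annulus

section MulInvariant

variable {p : ℂ} {G : ℂ → ℂ}

theorem exists_bound_of_mul_invariant (hp : p ≠ 0) (hp1 : ‖p‖ < 1)
    (hG : ∀ z ≠ 0, ContinuousAt G z) (hper : ∀ z ≠ 0, G (p * z) = G z) :
    ∃ K, ∀ z ≠ 0, ‖G z‖ ≤ K := by
  have hq0 : 0 < ‖p‖ := norm_pos_iff.2 hp
  have hA : ∀ z ∈ closedBall (0 : ℂ) 1 \ ball 0 ‖p‖, z ≠ 0 := by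
    rintro z ⟨-, hz⟩ rfl
    exact hz (mem_ball_self hq0)
  obtain ⟨K, hK⟩ := ((isCompact_closedBall (0 : ℂ) 1).diff isOpen_ball).exists_bound_of_continuousOn
    fun z hz => (hG z (hA z hz)).continuousWithinAt
  refine ⟨K, fun z hz => ?_⟩
  obtain ⟨n, hn₁, hn₂⟩ := exists_mem_Ioc_zpow (norm_pos_iff.2 hz) ((one_lt_inv₀ hq0).2 hp1)
  rw [inv_zpow] at hn₁ hn₂
  have h₁ : 1 < ‖p‖ ^ n * ‖z‖ := by
    simpa [(zpow_pos hq0 n).ne'] using mul_lt_mul_of_pos_left hn₁ (zpow_pos hq0 n)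
  have h₂ : ‖p‖ ^ (n + 1) * ‖z‖ ≤ 1 := by
    simpa [(zpow_pos hq0 (n + 1)).ne'] using
      mul_le_mul_of_nonneg_left hn₂ (zpow_pos hq0 (n + 1)).le
  rw [← apply_zpow_mul_eq_of_apply_mul_eq hp hper (n + 1) hz]
  refine hK _ ⟨?_, ?_⟩
  · rwa [mem_closedBall_zero_iff, norm_mul, norm_zpow]
  · rw [mem_ball_zero_iff, norm_mul, norm_zpow, zpow_add_one₀ hq0.ne', not_lt]
    nlinarith

theorem circleIntegral_inv_mul_eq_of_mul_invariant (hp : p ≠ 0) (hper : ∀ z ≠ 0, G (p * z) = G z)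
    {R : ℝ} (hR : 0 < R) : (∮ z in C(0, ‖p‖ * R), z⁻¹ * G z) = ∮ z in C(0, R), z⁻¹ * G z := by
  have havg : ∀ s : ℝ, s ≠ 0 → (∮ z in C(0, s), z⁻¹ * G z) = 2 * π * I * circleAverage G 0 s := by
    intro s hs
    rw [circleAverage_eq_circleIntegral hs, smul_eq_mul, ← mul_assoc,
      mul_inv_cancel₀ (by simp [pi_ne_zero]), one_mul]
    simp
  rw [havg R hR.ne', havg _ (mul_pos (norm_pos_iff.2 hp) hR).ne', ← circleAverage_comp_mul_left]
  congr 1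
  refine circleAverage_congr_sphere fun z hz => hper z ?_
  rintro rfl
  rw [mem_sphere_zero_iff_norm, norm_zero, abs_of_pos hR] at hz
  exact hR.ne hz

theorem apply_eq_apply_of_mul_invariant (hp : p ≠ 0) (hp1 : ‖p‖ < 1)
    (hG : ∀ z ≠ 0, DifferentiableAt ℂ G z) (hper : ∀ z ≠ 0, G (p * z) = G z) {z w : ℂ}
    (hz : z ≠ 0) (hw : w ≠ 0) : G z = G w := by
  obtain ⟨K, hK⟩ := exists_bound_of_mul_invariant hp hp1 (fun z hz => (hG z hz).continuousAt) hper
  set F := Function.update G 0 (limUnder (𝓝[≠] 0) G)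
  have hF : Differentiable ℂ F := by
    rw [← differentiableOn_univ]
    refine Complex.differentiableOn_update_limUnder_of_bddAbove univ_mem
      (fun z hz => (hG z hz.2).differentiableWithinAt) ⟨K, ?_⟩
    rintro _ ⟨z, hz, rfl⟩
    exact hK z hz.2
  have hFb : Bornology.IsBounded (range F) := by
    refine (isBounded_closedBall (x := 0) (r := max K ‖F 0‖)).subset ?_
    rintro _ ⟨v, rfl⟩
    rw [mem_closedBall_zero_iff]
    rcases eq_or_ne v 0 with rfl | hv
    · exact le_max_right _ _
    · rw [show F v = G v from Function.update_of_ne hv _ _]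
      exact (hK v hv).trans (le_max_left _ _)
  simpa [F, hz, hw] using hF.apply_eq_apply_of_bounded hFb z w

theorem HasResidueAt.eq_zero_of_mul_invariant {x ρ : ℂ} (hres : HasResidueAt G x ρ) (hp : p ≠ 0)
    (hp1 : ‖p‖ < 1) (hx : x ≠ 0) (hG : ∀ z ≠ 0, z ∉ zpowOrbit p x → DifferentiableAt ℂ G z)
    (hper : ∀ z ≠ 0, G (p * z) = G z) : ρ = 0 := by
  have hq0 : 0 < ‖p‖ := norm_pos_iff.2 hp
  have hx0 : 0 < ‖x‖ := norm_pos_iff.2 hx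
  -- the annulus `‖p‖ * R ≤ ‖z‖ ≤ R` meets the orbit of `x` only in `x`
  obtain ⟨R, hxR, hRx⟩ : ∃ R, ‖x‖ < R ∧ R < ‖x‖ / ‖p‖ :=
    exists_between (by rw [lt_div_iff₀ hq0]; nlinarith)
  rw [lt_div_iff₀ hq0] at hRx
  have hR0 : 0 < R := hx0.trans hxR
  set U : Set ℂ := {z | ‖p‖ * ‖x‖ < ‖z‖ ∧ ‖z‖ < ‖x‖ / ‖p‖}
  have hU : IsOpen U :=
    (isOpen_lt continuous_const continuous_norm).inter (isOpen_lt continuous_norm continuous_const)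
  have hAU : closedBall 0 R \ ball 0 (‖p‖ * R) ⊆ U := by
    rintro z ⟨hz₁, hz₂⟩
    rw [mem_closedBall_zero_iff] at hz₁
    rw [mem_ball_zero_iff, not_lt] at hz₂
    refine ⟨by nlinarith, by rw [lt_div_iff₀ hq0]; nlinarith⟩
  have hg : ∀ z ∈ U, z ≠ x → DifferentiableAt ℂ (fun z => z⁻¹ * G z) z := by
    rintro z ⟨hz₁, hz₂⟩ hzx
    have hz0 : z ≠ 0 := norm_pos_iff.1 ((by positivity : 0 ≤ ‖p‖ * ‖x‖).trans_lt hz₁)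
    refine (differentiableAt_inv hz0).mul (hG z hz0 fun hz => hzx ?_)
    exact eq_of_mem_zpowOrbit hp hp1 (self_mem_zpowOrbit p x) hz hz₁ hz₂
  have hresg : HasResidueAt (fun z => z⁻¹ * G z) x (x⁻¹ * ρ) :=
    (((continuousAt_inv₀ hx).tendsto.mono_left nhdsWithin_le_nhds).mul hres).congr
      fun w => by ring
  have key := circleIntegral_sub_circleIntegral_eq_of_hasResidueAt (mul_pos hq0 hR0)
    (by linarith) hxR hU hAU hg hresg
  rw [circleIntegral_inv_mul_eq_of_mul_invariant hp hper hR0, sub_self] at key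
  simpa [pi_ne_zero, hx] using key

end MulInvariant

section FiniteOrbits

variable {p : ℂ} {f : ℂ → ℂ} {S : Finset ℂ}

theorem hasResidueAt_zero_of_mem_zpowOrbit (hp : p ≠ 0) (hper : ∀ z ≠ 0, f (p * z) = f z)
    {y z : ℂ} (hy : HasResidueAt f y 0) (hz : z ∈ zpowOrbit p y) (hz0 : z ≠ 0) :
    HasResidueAt f z 0 := by
  obtain ⟨n, rfl⟩ := hz
  have hinv : ∀ w ≠ 0, HasResidueAt f (p * w) 0 = HasResidueAt f w 0 := fun w _ =>
    propext (by simpa using hasResidueAt_mul_iff (z := w) (ρ := 0) hp hper)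
  rwa [apply_zpow_mul_eq_of_apply_mul_eq (f := fun w => HasResidueAt f w 0) hp hinv n
    (right_ne_zero_of_mul hz0)]

theorem eventually_differentiableAt_of_zpowOrbits (hp : p ≠ 0) (hp1 : ‖p‖ < 1)
    (hf : ∀ z ≠ 0, (∀ y ∈ S, z ∉ zpowOrbit p y) → DifferentiableAt ℂ f z) {z : ℂ} (hz : z ≠ 0) :
    ∀ᶠ w in 𝓝[≠] z, DifferentiableAt ℂ f w := by
  filter_upwards [eventually_nhdsNE_ne z 0, (eventually_all_finset S).2 fun y _ =>
    eventually_nhdsNE_notMem_zpowOrbit hp hp1 y hz] with w hw0 hwS using hf w hw0 hwS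

theorem hasResidueAt_zero_of_zpowOrbits (hp : p ≠ 0) (hper : ∀ z ≠ 0, f (p * z) = f z)
    (hf : ∀ z ≠ 0, (∀ y ∈ S, z ∉ zpowOrbit p y) → DifferentiableAt ℂ f z) {z : ℂ} (hz : z ≠ 0)
    (hS : ∀ y ∈ S, z ∈ zpowOrbit p y → HasResidueAt f y 0) : HasResidueAt f z 0 := by
  by_cases hpole : ∃ y ∈ S, z ∈ zpowOrbit p y
  · obtain ⟨y, hy, hzy⟩ := hpole
    exact hasResidueAt_zero_of_mem_zpowOrbit hp hper (hS y hy hzy) hzy hz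
  · exact (hf z hz fun y hy hzy => hpole ⟨y, hy, hzy⟩).continuousAt.hasResidueAt_zero

theorem HasResidueAt.eq_zero_of_zpowOrbits {x ρ : ℂ} (hρ : HasResidueAt f x ρ)
    (hp : p ≠ 0) (hp1 : ‖p‖ < 1) (hx : x ≠ 0) (hper : ∀ z ≠ 0, f (p * z) = f z)
    (hf : ∀ z ≠ 0, (∀ y ∈ S, z ∉ zpowOrbit p y) → DifferentiableAt ℂ f z)
    (hS : ∀ y ∈ S, y ≠ x → HasResidueAt f y 0) : ρ = 0 := by
  have hiso := fun z (hz : z ≠ 0) => eventually_differentiableAt_of_zpowOrbits hp hp1 hf hz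
  refine (hρ.congr (puncturedLim_eventuallyEq (hiso x hx)).symm).eq_zero_of_mul_invariant hp hp1 hx
    (fun z hz hzx => differentiableAt_puncturedLim (hiso z hz)
      (hasResidueAt_zero_of_zpowOrbits hp hper hf hz fun y hy hzy => hS y hy ?_))
    fun z _ => puncturedLim_mul hp hper
  rintro rfl
  exact hzx hzy

theorem exists_forall_eq_of_zpowOrbits (hp : p ≠ 0) (hp1 : ‖p‖ < 1)
    (hper : ∀ z ≠ 0, f (p * z) = f z)
    (hf : ∀ z ≠ 0, (∀ y ∈ S, z ∉ zpowOrbit p y) → DifferentiableAt ℂ f z)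
    (hS : ∀ y ∈ S, HasResidueAt f y 0) :
    ∃ m, ∀ z ≠ 0, (∀ y ∈ S, z ∉ zpowOrbit p y) → f z = m := by
  refine ⟨puncturedLim f 1, fun z hz hgood => ?_⟩
  rw [← (hf z hz hgood).continuousAt.puncturedLim_eq]
  exact apply_eq_apply_of_mul_invariant hp hp1
    (fun w hw => differentiableAt_puncturedLim
      (eventually_differentiableAt_of_zpowOrbits hp hp1 hf hw)
      (hasResidueAt_zero_of_zpowOrbits hp hper hf hw fun y hy _ => hS y hy))
    (fun w _ => puncturedLim_mul hp hper) hz one_ne_zero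

end FiniteOrbits

theorem Matrix.exists_eq_smul_one_of_mulVec_eq_smul {R : Type*} [Semiring R]
    (M : Matrix (Fin 2) (Fin 2) R)
    (h₁ : ∃ α : R, M.mulVec ![1, 1] = α • ![1, 1]) (h₂ : ∃ α : R, M.mulVec ![0, 1] = α • ![0, 1])
    (h₃ : ∃ α : R, M.mulVec ![1, 0] = α • ![1, 0]) : ∃ s : R, M = s • 1 := by
  obtain ⟨α, hα⟩ := h₁
  obtain ⟨β, hβ⟩ := h₂
  obtain ⟨γ, hγ⟩ := h₃
  have h01 : M 0 1 = 0 := by simpa [Matrix.mulVec, dotProduct] using congrFun hβ 0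
  have h10 : M 1 0 = 0 := by simpa [Matrix.mulVec, dotProduct] using congrFun hγ 1
  have h00 : M 0 0 = α := by simpa [Matrix.mulVec, dotProduct, h01] using congrFun hα 0
  have h11 : M 1 1 = α := by simpa [Matrix.mulVec, dotProduct, h10] using congrFun hα 1
  refine ⟨α, Matrix.ext fun i j => ?_⟩
  fin_cases i <;> fin_cases j <;> simp [h00, h01, h10, h11]

theorem elliptic_matrix_rigidity_general (p a b c : ℂ)
    (hp0 : 0 < ‖p‖) (hp1 : ‖p‖ < 1)
    (ha : a ≠ 0) (hb : b ≠ 0) (hc : c ≠ 0)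
    (C : ℂ → Matrix (Fin 2) (Fin 2) ℂ)
    (hell : ∀ z : ℂ, z ≠ 0 → C (p * z) = C z)
    (hanal : ∀ z : ℂ, z ≠ 0 →
      (∀ n : ℤ, z ≠ p ^ n * a ∧ z ≠ p ^ n * b ∧ z ≠ p ^ n * c) →
      ∀ i j : Fin 2, AnalyticAt ℂ (fun w => C w i j) z)
    (Ra Rb Rc : Matrix (Fin 2) (Fin 2) ℂ)
    (hRa : Tendsto (fun z : ℂ => (z - a) • C z) (𝓝[≠] a) (𝓝 Ra))
    (hRb : Tendsto (fun z : ℂ => (z - b) • C z) (𝓝[≠] b) (𝓝 Rb))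
    (hRc : Tendsto (fun z : ℂ => (z - c) • C z) (𝓝[≠] c) (𝓝 Rc))
    (hRaform : ∃ t : ℂ, Ra = t • !![(1 : ℂ), -1; 1, -1])
    (hRbform : ∃ t : ℂ, Rb = t • !![(0 : ℂ), 0; 1, 0])
    (hRcform : ∃ t : ℂ, Rc = t • !![(0 : ℂ), 1; 0, 0]) :
    ∃ M : Matrix (Fin 2) (Fin 2) ℂ,
      (∀ z : ℂ, z ≠ 0 →
        (∀ n : ℤ, z ≠ p ^ n * a ∧ z ≠ p ^ n * b ∧ z ≠ p ^ n * c) → C z = M) ∧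
      (((∃ α : ℂ, M.mulVec ![1, 1] = α • ![1, 1]) ∧
        (∃ α : ℂ, M.mulVec ![0, 1] = α • ![0, 1]) ∧
        (∃ α : ℂ, M.mulVec ![1, 0] = α • ![1, 0])) →
        ∃ s : ℂ, M = s • (1 : Matrix (Fin 2) (Fin 2) ℂ)) := by
  have hp : p ≠ 0 := norm_pos_iff.1 hp0
  set S : Finset ℂ := {a, b, c}
  have hgood : ∀ z, (∀ y ∈ S, z ∉ zpowOrbit p y) ↔
      ∀ n : ℤ, z ≠ p ^ n * a ∧ z ≠ p ^ n * b ∧ z ≠ p ^ n * c := by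
    simp [S, zpowOrbit, forall_and]
  have hper : ∀ i j, ∀ z ≠ 0, C (p * z) i j = C z i j := fun i j z hz => by rw [hell z hz]
  have hdiff : ∀ i j, ∀ z ≠ 0, (∀ y ∈ S, z ∉ zpowOrbit p y) → DifferentiableAt ℂ (C · i j) z :=
    fun i j z hz hzS => (hanal z hz ((hgood z).1 hzS) i j).differentiableAt
  have hres : ∀ {y R}, Tendsto (fun z => (z - y) • C z) (𝓝[≠] y) (𝓝 R) →
      ∀ i j, HasResidueAt (C · i j) y (R i j) := fun h i j =>
    tendsto_pi_nhds.1 (tendsto_pi_nhds.1 h i) j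
  obtain ⟨t₁, rfl⟩ := hRaform
  obtain ⟨t₂, rfl⟩ := hRbform
  obtain ⟨t₃, rfl⟩ := hRcform
  obtain rfl : t₁ = 0 := (by simpa using hres hRa 0 0 : HasResidueAt _ a t₁).eq_zero_of_zpowOrbits
    hp hp1 ha (hper 0 0) (hdiff 0 0)
    (by simpa [S] using ⟨fun _ => by simpa using hres hRb 0 0,
      fun _ => by simpa using hres hRc 0 0⟩)
  obtain rfl : t₂ = 0 := (by simpa using hres hRb 1 0 : HasResidueAt _ b t₂).eq_zero_of_zpowOrbits
    hp hp1 hb (hper 1 0) (hdiff 1 0)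
    (by simpa [S] using ⟨fun _ => by simpa using hres hRa 1 0,
      fun _ => by simpa using hres hRc 1 0⟩)
  obtain rfl : t₃ = 0 := (by simpa using hres hRc 0 1 : HasResidueAt _ c t₃).eq_zero_of_zpowOrbits
    hp hp1 hc (hper 0 1) (hdiff 0 1)
    (by simpa [S] using ⟨fun _ => by simpa using hres hRa 0 1,
      fun _ => by simpa using hres hRb 0 1⟩)
  choose m hm using fun i j => exists_forall_eq_of_zpowOrbits hp hp1 (hper i j) (hdiff i j)
    (by simpa [S] using ⟨by simpa using hres hRa i j, by simpa using hres hRb i j,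
      by simpa using hres hRc i j⟩)
  exact ⟨Matrix.of m, fun z hz hzS => Matrix.ext fun i j => hm i j z hz ((hgood z).2 hzS),
    fun ⟨h₁, h₂, h₃⟩ => Matrix.exists_eq_smul_one_of_mulVec_eq_smul _ h₁ h₂ h₃⟩

theorem elliptic_matrix_rigidity (p a b c : ℂ)
    (hp0 : 0 < ‖p‖) (hp1 : ‖p‖ < 1)
    (ha : a ≠ 0) (hb : b ≠ 0) (hc : c ≠ 0)
    (hab : ∀ n : ℤ, a ≠ p ^ n * b) (hac : ∀ n : ℤ, a ≠ p ^ n * c)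
    (hbc : ∀ n : ℤ, b ≠ p ^ n * c)
    (C : ℂ → Matrix (Fin 2) (Fin 2) ℂ)
    (hell : ∀ z : ℂ, z ≠ 0 → C (p * z) = C z)
    (hanal : ∀ z : ℂ, z ≠ 0 →
      (∀ n : ℤ, z ≠ p ^ n * a ∧ z ≠ p ^ n * b ∧ z ≠ p ^ n * c) →
      ∀ i j : Fin 2, AnalyticAt ℂ (fun w => C w i j) z)
    (Ra Rb Rc : Matrix (Fin 2) (Fin 2) ℂ)
    (hRa : Tendsto (fun z : ℂ => (z - a) • C z) (𝓝[≠] a) (𝓝 Ra))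
    (hRb : Tendsto (fun z : ℂ => (z - b) • C z) (𝓝[≠] b) (𝓝 Rb))
    (hRc : Tendsto (fun z : ℂ => (z - c) • C z) (𝓝[≠] c) (𝓝 Rc))
    (hRaform : ∃ t : ℂ, Ra = t • !![(1 : ℂ), -1; 1, -1])
    (hRbform : ∃ t : ℂ, Rb = t • !![(0 : ℂ), 0; 1, 0])
    (hRcform : ∃ t : ℂ, Rc = t • !![(0 : ℂ), 1; 0, 0]) :
    ∃ M : Matrix (Fin 2) (Fin 2) ℂ,
      (∀ z : ℂ, z ≠ 0 →
        (∀ n : ℤ, z ≠ p ^ n * a ∧ z ≠ p ^ n * b ∧ z ≠ p ^ n * c) → C z = M) ∧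
      (((∃ α : ℂ, M.mulVec ![1, 1] = α • ![1, 1]) ∧
        (∃ α : ℂ, M.mulVec ![0, 1] = α • ![0, 1]) ∧
        (∃ α : ℂ, M.mulVec ![1, 0] = α • ![1, 0])) →
        ∃ s : ℂ, M = s • (1 : Matrix (Fin 2) (Fin 2) ℂ)) :=
  elliptic_matrix_rigidity_general p a b c hp0 hp1 ha hb hc C hell hanal Ra Rb Rc hRa hRb hRc
    hRaform hRbform hRcform
end
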